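/- Let X be a simple graph on n vertices. The girth of FS(X, Star_n) is infinite (FS(X, Star_n) is acyclic) if and only if the girth of X is infinite (X is acyclic). -/

import Mathlib

/-! The map `σ ↦ σ⁻¹ c`, recording which vertex of `X` carries the centre `c` of the star, is a
graph homomorphism `FS X (starGraph c) → X`: every move slides the centre along an edge of `X`,
and the move is determined by where the centre goes, so the map is bijective on neighbourhoods.
Hence a cycle of `FS X (starGraph c)` maps to a closed non-backtracking walk of positive length in
`X`, which a forest does not have. Conversely, running around a cycle of `X` gives
non-backtracking walks of every length; they lift to non-backtracking walks of the finite graph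
`FS X (starGraph c)`, which therefore cannot all be paths. -/

open SimpleGraph

/-- The friends-and-strangers graph `FS X Y`: its vertices are the bijections from `V(X)`
to `V(Y)`, with `σ, τ` adjacent iff they differ by a swap along an edge of `X` whose
images under `σ` form an edge of `Y`. -/
def FS {V W : Type*} (X : SimpleGraph V) (Y : SimpleGraph W) : SimpleGraph (V ≃ W) where
  Adj σ τ := ∃ a b : V, X.Adj a b ∧ Y.Adj (σ a) (σ b) ∧ τ a = σ b ∧ τ b = σ a ∧
      ∀ c : V, c ≠ a → c ≠ b → τ c = σ c
  symm := ⟨by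
    rintro σ τ ⟨a, b, hX, hY, h1, h2, h3⟩
    refine ⟨a, b, hX, ?_, h2.symm, h1.symm, fun c hca hcb => (h3 c hca hcb).symm⟩
    rw [h1, h2]; exact hY.symm⟩
  loopless := ⟨by
    rintro σ ⟨a, b, hX, hY, h1, h2, h3⟩
    exact hY.ne h1⟩

/-- The star graph on `Fin n`: the vertex with value `n - 1` (playing the role of the
vertex `n` of `{1, …, n}`) is adjacent to all other vertices, and there are no
other edges. -/
def starGraph' (n : ℕ) : SimpleGraph (Fin n) where
  Adj a b := a ≠ b ∧ (a.val = n - 1 ∨ b.val = n - 1)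
  symm := ⟨by rintro a b ⟨h1, h2⟩; exact ⟨h1.symm, h2.symm⟩⟩
  loopless := ⟨by rintro a ⟨h, _⟩; exact h rfl⟩

namespace SimpleGraph

variable {V V' : Type*} {G : SimpleGraph V} {H : SimpleGraph V'}

namespace Walk

def IsNonBacktracking {u v : V} (p : G.Walk u v) : Prop :=
  ∀ i, i + 2 ≤ p.length → p.getVert (i + 2) ≠ p.getVert i

@[simp]
lemma isNonBacktracking_nil {u : V} : (nil : G.Walk u u).IsNonBacktracking := by
  simp [IsNonBacktracking]

lemma isNonBacktracking_cons_iff {u v w : V} {h : G.Adj u v} {p : G.Walk v w} :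
    (cons h p).IsNonBacktracking ↔ p.snd ≠ u ∧ p.IsNonBacktracking := by
  constructor
  · intro hp
    refine ⟨?_, fun i hi => hp (i + 1) (by simp; omega)⟩
    cases p with
    | nil => exact h.ne.symm
    | cons _ q => exact hp 0 (by simp)
  · rintro ⟨hsnd, hp⟩ (_ | i) hi
    · cases p with
      | nil => simp at hi
      | cons _ q => exact hsnd
    · exact hp i (by simp at hi; omega)

lemma IsTrail.isNonBacktracking {u v : V} {p : G.Walk u v} (hp : p.IsTrail) :
    p.IsNonBacktracking := by
  induction p with
  | nil => simp
  | @cons u x w h q ih =>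
    rw [isTrail_cons] at hp
    refine isNonBacktracking_cons_iff.mpr ⟨?_, ih hp.1⟩
    cases q with
    | nil => exact h.ne.symm
    | cons _ _ =>
      rintro rfl
      exact hp.2 (by simp [Sym2.eq_swap])

lemma IsNonBacktracking.map {f : G →g H} (hf : ∀ v, Set.InjOn f (G.neighborSet v))
    {u v : V} {p : G.Walk u v} (hp : p.IsNonBacktracking) : (p.map f).IsNonBacktracking := by
  intro i hi heq
  rw [length_map] at hi
  rw [getVert_map, getVert_map] at heq
  refine hp i hi (hf (p.getVert (i + 1)) ?_ ?_ heq)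
  · exact p.adj_getVert_succ (by omega)
  · exact (p.adj_getVert_succ (by omega)).symm

lemma IsNonBacktracking.isPath (hG : G.IsAcyclic) {u v : V} {p : G.Walk u v}
    (hp : p.IsNonBacktracking) : p.IsPath := by
  induction p with
  | nil => exact .nil
  | @cons u x w h q ih =>
    obtain ⟨hsnd, hq⟩ := isNonBacktracking_cons_iff.mp hp
    have hqp := ih hq
    exact hqp.cons fun hu => hsnd (hG.eq_snd_of_adj_start hqp h.symm hu).symm

lemma exists_lift {f : G →g H} (hf : ∀ v w, H.Adj (f v) w → ∃ v', G.Adj v v' ∧ f v' = w) :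
    ∀ {u w : V'} (p : H.Walk u w) {v : V}, f v = u →
      ∃ (v' : V) (q : G.Walk v v'), q.length = p.length ∧ ∀ i, f (q.getVert i) = p.getVert i
  | _, _, nil, v, hv => ⟨v, nil, rfl, fun _ => hv⟩
  | _, _, cons h p, v, hv => by
    obtain ⟨v₁, hadj, hv₁⟩ := hf v _ (hv ▸ h)
    obtain ⟨v', q, hlen, hq⟩ := exists_lift hf p hv₁
    exact ⟨v', cons hadj q, by simp [hlen], fun | 0 => hv | i + 1 => hq i⟩

lemma exists_isNonBacktracking_length_eq {S : Set V} (hS : S.Nonempty)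
    (hdeg : ∀ v ∈ S, ∀ u, ∃ w ∈ S, G.Adj v w ∧ w ≠ u) (k : ℕ) :
    ∃ (u : V) (_ : u ∈ S) (w : V) (p : G.Walk u w), p.IsNonBacktracking ∧ p.length = k := by
  induction k with
  | zero => exact ⟨hS.some, hS.some_mem, _, nil, isNonBacktracking_nil, rfl⟩
  | succ k ih =>
    obtain ⟨u, hu, w, p, hp, hlen⟩ := ih
    obtain ⟨x, hx, hadj, hne⟩ := hdeg u hu p.snd
    exact ⟨x, hx, w, cons hadj.symm p, isNonBacktracking_cons_iff.mpr ⟨hne.symm, hp⟩,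
      by simp [hlen]⟩

lemma IsCycle.exists_isNonBacktracking_length_eq {v : V} {c : G.Walk v v} (hc : c.IsCycle)
    (k : ℕ) : ∃ (u w : V) (p : G.Walk u w), p.IsNonBacktracking ∧ p.length = k := by
  have hdeg : ∀ x ∈ {x | x ∈ c.support}, ∀ y, ∃ z ∈ {x | x ∈ c.support}, G.Adj x z ∧ z ≠ y := by
    intro x hx y
    obtain ⟨a, b, hab, hnbr⟩ := Set.ncard_eq_two.mp (hc.ncard_neighborSet_toSubgraph_eq_two hx)
    obtain ⟨z, hz, hzy⟩ : ∃ z ∈ c.toSubgraph.neighborSet x, z ≠ y := by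
      by_cases hay : a = y
      · exact ⟨b, by simp [hnbr], hay ▸ hab.symm⟩
      · exact ⟨a, by simp [hnbr], hay⟩
    exact ⟨z, c.mem_verts_toSubgraph.mp hz.snd_mem, hz.adj_sub, hzy⟩
  obtain ⟨u, -, h⟩ := Walk.exists_isNonBacktracking_length_eq ⟨v, c.start_mem_support⟩ hdeg k
  exact ⟨u, h⟩

end Walk

open Walk

theorem IsAcyclic.of_hom_locallyInjective (f : G →g H) (hf : ∀ v, Set.InjOn f (G.neighborSet v))
    (hH : H.IsAcyclic) : G.IsAcyclic := by
  intro v c hc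
  have hnil := isPath_iff_nil.mp ((hc.isTrail.isNonBacktracking.map hf).isPath hH)
  have := hc.three_le_length
  rw [← length_eq_zero_iff, length_map] at hnil
  omega

theorem not_isAcyclic_of_hom_locallySurjective [Finite V] (f : G →g H)
    (hf : ∀ v w, H.Adj (f v) w → ∃ v', G.Adj v v' ∧ f v' = w) (hsurj : Function.Surjective f)
    (hH : ¬ H.IsAcyclic) : ¬ G.IsAcyclic := by
  intro hG
  have := Fintype.ofFinite V
  obtain ⟨x, c, hc⟩ : ∃ (x : V') (c : H.Walk x x), c.IsCycle := by
    simpa [IsAcyclic] using hH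
  obtain ⟨u, w, p, hp, hlen⟩ := hc.exists_isNonBacktracking_length_eq (Fintype.card V)
  obtain ⟨v, hv⟩ := hsurj u
  obtain ⟨v', q, hqlen, hq⟩ := exists_lift hf p hv
  have hqnb : q.IsNonBacktracking := fun i hi heq =>
    hp i (hqlen ▸ hi) (by rw [← hq, ← hq, heq])
  have := (hqnb.isPath hG).length_lt
  omega

end SimpleGraph

namespace FS

variable {V W : Type*} [DecidableEq V] {X : SimpleGraph V} {c : W}

lemma eq_swap_of_apply_eq_center {σ τ : V ≃ W} {a b : V} (ha : σ a = c) (h₁ : τ a = σ b)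
    (h₂ : τ b = σ a) (hrest : ∀ x, x ≠ a → x ≠ b → τ x = σ x) :
    σ.symm c = a ∧ τ.symm c = b ∧ τ = (Equiv.swap a b).trans σ := by
  refine ⟨σ.symm_apply_eq.mpr ha.symm, τ.symm_apply_eq.mpr (h₂.trans ha).symm, ?_⟩
  ext x
  rcases eq_or_ne x a with rfl | hxa
  · simp [h₁]
  rcases eq_or_ne x b with rfl | hxb
  · simp [h₂]
  · simp [Equiv.swap_apply_of_ne_of_ne hxa hxb, hrest x hxa hxb]

lemma adj_and_eq_swap {σ τ : V ≃ W} (h : (FS X (starGraph c)).Adj σ τ) :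
    X.Adj (σ.symm c) (τ.symm c) ∧ τ = (Equiv.swap (σ.symm c) (τ.symm c)).trans σ := by
  obtain ⟨a, b, hX, hY, h₁, h₂, hrest⟩ := h
  rcases (starGraph_adj.mp hY).2 with ha | hb
  · obtain ⟨hσ, hτ, heq⟩ := eq_swap_of_apply_eq_center ha h₁ h₂ hrest
    exact ⟨hσ ▸ hτ ▸ hX, hσ ▸ hτ ▸ heq⟩
  · obtain ⟨hσ, hτ, heq⟩ := eq_swap_of_apply_eq_center hb h₂ h₁ fun x hxb hxa => hrest x hxa hxb
    exact ⟨hσ ▸ hτ ▸ hX.symm, hσ ▸ hτ ▸ heq⟩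

def holeHom (X : SimpleGraph V) (c : W) : FS X (starGraph c) →g X where
  toFun σ := σ.symm c
  map_rel' h := (adj_and_eq_swap h).1

@[simp]
lemma holeHom_apply (σ : V ≃ W) : holeHom X c σ = σ.symm c := rfl

lemma holeHom_injOn_neighborSet (σ : V ≃ W) :
    Set.InjOn (holeHom X c) ((FS X (starGraph c)).neighborSet σ) := by
  intro τ₁ h₁ τ₂ h₂ heq
  rw [(adj_and_eq_swap h₁).2, (adj_and_eq_swap h₂).2]
  exact congrArg (fun v => (Equiv.swap (σ.symm c) v).trans σ) heq

lemma exists_adj_holeHom_eq {σ : V ≃ W} {w : V} (h : X.Adj (holeHom X c σ) w) :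
    ∃ τ, (FS X (starGraph c)).Adj σ τ ∧ holeHom X c τ = w := by
  rw [holeHom_apply] at h
  refine ⟨(Equiv.swap (σ.symm c) w).trans σ, ⟨σ.symm c, w, h, ?_, by simp, by simp, ?_⟩, by simp⟩
  · simpa [Equiv.symm_apply_eq] using h.ne
  · intro x hxa hxw
    simp [Equiv.swap_apply_of_ne_of_ne hxa hxw]

lemma holeHom_surjective (e : V ≃ W) : Function.Surjective (holeHom X c) :=
  fun v => ⟨(Equiv.swap v (e.symm c)).trans e, by simp⟩

theorem isAcyclic_starGraph_iff [Finite V] (e : V ≃ W) :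
    (FS X (starGraph c)).IsAcyclic ↔ X.IsAcyclic := by
  refine ⟨fun h => ?_, .of_hom_locallyInjective (holeHom X c) holeHom_injOn_neighborSet⟩
  by_contra hX
  exact not_isAcyclic_of_hom_locallySurjective (holeHom X c) (fun _ _ => exists_adj_holeHom_eq)
    (holeHom_surjective e) hX h

end FS

/-- `FS(X, Star_n)` is acyclic (has infinite girth) iff `X` is acyclic (has infinite
girth). -/
theorem stmt12 {V : Type} [Fintype V] (n : ℕ) (hV : Fintype.card V = n)
    (X : SimpleGraph V) :
    (FS X (starGraph' n)).egirth = ⊤ ↔ X.egirth = ⊤ := by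
  classical
  rw [egirth_eq_top, egirth_eq_top]
  rcases n.eq_zero_or_pos with rfl | hn
  · have : IsEmpty V := Fintype.card_eq_zero_iff.mp hV
    exact iff_of_true IsAcyclic.of_subsingleton IsAcyclic.of_subsingleton
  · have hstar : starGraph' n = starGraph ⟨n - 1, by omega⟩ := by
      ext a b
      simp [starGraph', Fin.ext_iff]
    rw [hstar]
    exact FS.isAcyclic_starGraph_iff (Fintype.equivFinOfCardEq hV)
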